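/- arXiv:1610.07541 — 2 statements merged into one kernel-verified Lean document; each statement's English description precedes it below -/
import Mathlib

section
/- Suppose superconformal transition data satisfy the triple cocycle condition. Then on U ∩ V ∩ W the coefficients g¹² satisfy the coboundary-defect formula: g¹²_{UW} = (∂f_{VW}/∂y)·g¹²_{UV} + g¹²_{VW} + ζ_{VW}(ψ²_{UV}ψ¹_{VW} − ψ¹_{UV}ψ²_{VW}). Equivalently, the Čech coboundary of the T_C-valued 1-cochain {g¹²_{UV} ∂/∂y} equals the cup-product cocycle ψ¹⊗ψ² − ψ²⊗ψ¹ of the T_C^{1/2}-valued 1-cocycles ψ¹, ψ² (under the isomorphism T_C^{1/2} ⊗ T_C^{1/2} ≅ T_C). -/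
/-- Transition data of an odd, second order deformation of a super Riemann surface:
`ρ⁺(x,θ,ξ) = F x + (F1 x · ξ₁ + F2 x · ξ₂) θ + G x · ξ₁ξ₂` and
`ρ⁻(x,θ,ξ) = Z x · θ + P1 x · ξ₁ + P2 x · ξ₂ + Z12 x · ξ₁ξ₂ θ`,
recorded through its holomorphic coefficient functions
`F = f_{UV}`, `Fi = f^i_{UV}`, `G = g¹²_{UV}`, `Z = ζ_{UV}`, `Pi = ψ^i_{UV}`,
`Z12 = ζ¹²_{UV}`. -/
structure SCData where
  F : ℂ → ℂ
  F1 : ℂ → ℂ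
  F2 : ℂ → ℂ
  G : ℂ → ℂ
  Z : ℂ → ℂ
  P1 : ℂ → ℂ
  P2 : ℂ → ℂ
  Z12 : ℂ → ℂ

/-- Composition `b ∘ a` of transition data: substitute `a` into `b`, Taylor-expand in the
(square-zero) nilpotent corrections, and collect the coefficients of the Grassmann
monomials `1, ξᵢθ, ξ₁ξ₂` (even component) and `θ, ξᵢ, ξ₁ξ₂θ` (odd component). -/
noncomputable def SCData.comp (b a : SCData) : SCData where
  F := fun x => b.F (a.F x)
  F1 := fun x => deriv b.F (a.F x) * a.F1 x + a.Z x * b.F1 (a.F x)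
  F2 := fun x => deriv b.F (a.F x) * a.F2 x + a.Z x * b.F2 (a.F x)
  G := fun x => deriv b.F (a.F x) * a.G x + b.G (a.F x)
      + b.F1 (a.F x) * a.P2 x - b.F2 (a.F x) * a.P1 x
  Z := fun x => b.Z (a.F x) * a.Z x
  P1 := fun x => b.Z (a.F x) * a.P1 x + b.P1 (a.F x)
  P2 := fun x => b.Z (a.F x) * a.P2 x + b.P2 (a.F x)
  Z12 := fun x => b.Z (a.F x) * a.Z12 x + a.Z x * b.Z12 (a.F x)
      + deriv b.Z (a.F x) * (a.G x * a.Z x - a.F1 x * a.P2 x + a.F2 x * a.P1 x)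
      + deriv b.P1 (a.F x) * a.F2 x - deriv b.P2 (a.F x) * a.F1 x

/-- The transition data is a family of superconformal morphisms (on the set `s`):
`∂f/∂x = ζ²`, `f^i = ζ ψ^i` and `dg¹²/dx = 2ζζ¹² − (dψ¹/dx)ψ² + ψ¹(dψ²/dx)`. -/
def SCData.SuperconformalOn (r : SCData) (s : Set ℂ) : Prop :=
  ∀ x ∈ s,
    deriv r.F x = r.Z x ^ 2 ∧
    r.F1 x = r.Z x * r.P1 x ∧
    r.F2 x = r.Z x * r.P2 x ∧
    deriv r.G x = 2 * r.Z x * r.Z12 x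
      - deriv r.P1 x * r.P2 x + r.P1 x * deriv r.P2 x

/-- All coefficient functions are holomorphic on `s`. -/
def SCData.DiffOn (r : SCData) (s : Set ℂ) : Prop :=
  DifferentiableOn ℂ r.F s ∧ DifferentiableOn ℂ r.F1 s ∧ DifferentiableOn ℂ r.F2 s ∧
  DifferentiableOn ℂ r.G s ∧ DifferentiableOn ℂ r.Z s ∧ DifferentiableOn ℂ r.P1 s ∧
  DifferentiableOn ℂ r.P2 s ∧ DifferentiableOn ℂ r.Z12 s

/-- The cocycle condition on intersections: `b ∘ a` is the identity morphism of `ℂ^{1|3}`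
at every point of `s`. -/
def SCData.CompEqIdOn (b a : SCData) (s : Set ℂ) : Prop :=
  ∀ x ∈ s,
    (b.comp a).F x = x ∧ (b.comp a).F1 x = 0 ∧ (b.comp a).F2 x = 0 ∧
    (b.comp a).G x = 0 ∧ (b.comp a).Z x = 1 ∧ (b.comp a).P1 x = 0 ∧
    (b.comp a).P2 x = 0 ∧ (b.comp a).Z12 x = 0

/-!
STATEMENT 5.  On a triple overlap `U ∩ V ∩ W`, superconformal transition data satisfying
the cocycle condition `ρ_{UW;ξ} = ρ_{VW;ξ} ∘ ρ_{UV;ξ}` satisfies the coboundary-defect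
formula for the `ξ₁ξ₂`-coefficients `g¹²`:
`g¹²_{UW} = (∂f_{VW}/∂y)∘f_{UV} · g¹²_{UV} + g¹²_{VW}∘f_{UV}
  + ζ_{VW}∘f_{UV} · (ψ²_{UV} · ψ¹_{VW}∘f_{UV} − ψ¹_{UV} · ψ²_{VW}∘f_{UV})`,
i.e. the Čech coboundary of the `T_C`-valued 1-cochain `{g¹²_{UV} ∂/∂y}` equals the
cup-product cocycle `ψ¹ ⊗ ψ² − ψ² ⊗ ψ¹` of the `T_C^{1/2}`-valued 1-cocycles `ψ¹, ψ²`
under the multiplication `T_C^{1/2} ⊗ T_C^{1/2} ≅ T_C` (which contributes the factor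
`ζ_{VW}∘f_{UV}` changing the trivialization). -/
theorem statement5 (s t : Set ℂ) (hs : IsOpen s) (ht : IsOpen t)
    (rUV rVW rUW : SCData)
    (hmapsUV : Set.MapsTo rUV.F s t)
    (hdUV : rUV.DiffOn s) (hdVW : rVW.DiffOn t) (hdUW : rUW.DiffOn s)
    (hzUV : ∀ x ∈ s, rUV.Z x ≠ 0) (hzVW : ∀ y ∈ t, rVW.Z y ≠ 0)
    (hscUV : rUV.SuperconformalOn s) (hscVW : rVW.SuperconformalOn t)
    (hscUW : rUW.SuperconformalOn s)
    -- the cocycle condition ρ_{UW} = ρ_{VW} ∘ ρ_{UV} on the triple overlap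
    (hcoc : ∀ x ∈ s,
      (rVW.comp rUV).F x = rUW.F x ∧ (rVW.comp rUV).F1 x = rUW.F1 x ∧
      (rVW.comp rUV).F2 x = rUW.F2 x ∧ (rVW.comp rUV).G x = rUW.G x ∧
      (rVW.comp rUV).Z x = rUW.Z x ∧ (rVW.comp rUV).P1 x = rUW.P1 x ∧
      (rVW.comp rUV).P2 x = rUW.P2 x ∧ (rVW.comp rUV).Z12 x = rUW.Z12 x) :
    ∀ x ∈ s,
      rUW.G x = deriv rVW.F (rUV.F x) * rUV.G x + rVW.G (rUV.F x)
        + rVW.Z (rUV.F x) *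
            (rUV.P2 x * rVW.P1 (rUV.F x) - rUV.P1 x * rVW.P2 (rUV.F x)) := by
  intro x hx
  have hy := hmapsUV hx
  obtain ⟨-, h1, h2, -⟩ := hscVW (rUV.F x) hy
  have hG := (hcoc x hx).2.2.2.1
  rw [← hG]
  show deriv rVW.F (rUV.F x) * rUV.G x + rVW.G (rUV.F x)
      + rVW.F1 (rUV.F x) * rUV.P2 x - rVW.F2 (rUV.F x) * rUV.P1 x = _
  rw [h1, h2]; ring
end

section
/- Given superconformal second-order transition data with dg¹²_{UV}/dx = 2ζ_{UV}ζ¹²_{UV}, suppose there exist even 0-cochains λ¹² with g¹²_{UV} = ζ²_{UV}λ¹²_U − λ¹²_V∘f_{UV} (the coboundary condition, using ∂f_{UV}/∂x = ζ²_{UV}). Then ζ¹²_{UV} = (1/2)ζ_{UV}(∂λ¹²_U/∂x − (∂λ¹²_V/∂y)∘f_{UV}) + (∂ζ_{UV}/∂x)λ¹²_U. Consequently, defining φ¹²_U := (1/2)∂λ¹²_U/∂x on each chart, the final splitting condition ζ¹²_{UV} = ζ_{UV}φ¹²_U − ζ_{UV}(φ¹²_V∘f_{UV}) + (∂ζ_{UV}/∂x)λ¹²_U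 is satisfied. -/
/-!
Differentiating the coboundary relation `g = ζ² λ_U - λ_V ∘ f` and using `f' = ζ²` gives
`g' = 2 ζ ζ' λ_U + ζ² (λ_U' - λ_V' ∘ f)`; comparing with `g' = 2 ζ ζ¹²` and cancelling `2 ζ`
expresses `ζ¹²` through the derivatives of the `λ`'s, which is exactly the splitting condition
with `φ := ½ λ'`.
-/

open Filter Topology

section

variable {𝕜 : Type*} [NontriviallyNormedField 𝕜] {f z lamU lamV g : 𝕜 → 𝕜} {x w : 𝕜}

theorem hasDerivAt_sq_mul_sub_comp (hz : DifferentiableAt 𝕜 z x)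
    (hlamU : DifferentiableAt 𝕜 lamU x) (hlamV : DifferentiableAt 𝕜 lamV (f x))
    (hf : DifferentiableAt 𝕜 f x) :
    HasDerivAt (fun x => z x ^ 2 * lamU x - lamV (f x))
      (2 * z x * deriv z x * lamU x + z x ^ 2 * deriv lamU x
        - deriv lamV (f x) * deriv f x) x := by
  refine (((hz.hasDerivAt.pow 2).mul hlamU.hasDerivAt).sub
    (hlamV.hasDerivAt.comp x hf.hasDerivAt)).congr_deriv ?_
  norm_num

theorem eq_of_deriv_coboundary [CharZero 𝕜] (hz : DifferentiableAt 𝕜 z x)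
    (hlamU : DifferentiableAt 𝕜 lamU x) (hlamV : DifferentiableAt 𝕜 lamV (f x))
    (hf : DifferentiableAt 𝕜 f x) (hzx : z x ≠ 0) (hf' : deriv f x = z x ^ 2)
    (hg : g =ᶠ[𝓝 x] fun x => z x ^ 2 * lamU x - lamV (f x))
    (hsc : deriv g x = 2 * z x * w) :
    w = 1 / 2 * z x * (deriv lamU x - deriv lamV (f x)) + deriv z x * lamU x := by
  have hg' : 2 * z x * w = 2 * z x * deriv z x * lamU x + z x ^ 2 * deriv lamU x
      - deriv lamV (f x) * z x ^ 2 := by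
    rw [← hsc, hg.deriv_eq, (hasDerivAt_sq_mul_sub_comp hz hlamU hlamV hf).deriv, hf']
  apply mul_left_cancel₀ (mul_ne_zero two_ne_zero hzx)
  rw [hg']
  ring

end

theorem statement15_general (s t : Set ℂ) (hs : IsOpen s) (ht : IsOpen t)
    (f z z12 g12 lamU lamV : ℂ → ℂ)
    (hmaps : Set.MapsTo f s t)
    (hf : DifferentiableOn ℂ f s) (hz : DifferentiableOn ℂ z s)
    (hlamU : DifferentiableOn ℂ lamU s)
    (hlamV : DifferentiableOn ℂ lamV t)
    (hzne : ∀ x ∈ s, z x ≠ 0)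
    (hchain : ∀ x ∈ s, deriv f x = z x ^ 2)
    (hcobound : ∀ x ∈ s, g12 x = z x ^ 2 * lamU x - lamV (f x))
    (hsc : ∀ x ∈ s, deriv g12 x = 2 * z x * z12 x) :
    (∀ x ∈ s, z12 x =
      (1 / 2) * z x * (deriv lamU x - deriv lamV (f x)) + deriv z x * lamU x) ∧
    (∀ x ∈ s, z12 x =
      z x * ((1 / 2) * deriv lamU x) - z x * ((1 / 2) * deriv lamV (f x))
        + deriv z x * lamU x) := by
  have hz12 : ∀ x ∈ s, z12 x =
      (1 / 2) * z x * (deriv lamU x - deriv lamV (f x)) + deriv z x * lamU x := by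
    intro x hx
    exact eq_of_deriv_coboundary (hz.differentiableAt (hs.mem_nhds hx))
      (hlamU.differentiableAt (hs.mem_nhds hx))
      (hlamV.differentiableAt (ht.mem_nhds (hmaps hx)))
      (hf.differentiableAt (hs.mem_nhds hx)) (hzne x hx) (hchain x hx)
      (eventuallyEq_of_mem (hs.mem_nhds hx) hcobound) (hsc x hx)
  refine ⟨hz12, fun x hx => ?_⟩
  rw [hz12 x hx]
  ring

theorem statement15 (s t : Set ℂ) (hs : IsOpen s) (ht : IsOpen t)
    (f z z12 g12 lamU lamV : ℂ → ℂ)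
    (hmaps : Set.MapsTo f s t)
    (hf : DifferentiableOn ℂ f s) (hz : DifferentiableOn ℂ z s)
    (hg12 : DifferentiableOn ℂ g12 s) (hlamU : DifferentiableOn ℂ lamU s)
    (hlamV : DifferentiableOn ℂ lamV t)
    (hzne : ∀ x ∈ s, z x ≠ 0)
    (hchain : ∀ x ∈ s, deriv f x = z x ^ 2)
    (hcobound : ∀ x ∈ s, g12 x = z x ^ 2 * lamU x - lamV (f x))
    (hsc : ∀ x ∈ s, deriv g12 x = 2 * z x * z12 x) :
    (∀ x ∈ s, z12 x =
      (1 / 2) * z x * (deriv lamU x - deriv lamV (f x)) + deriv z x * lamU x) ∧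
    (∀ x ∈ s, z12 x =
      z x * ((1 / 2) * deriv lamU x) - z x * ((1 / 2) * deriv lamV (f x))
        + deriv z x * lamU x) :=
  statement15_general s t hs ht f z z12 g12 lamU lamV hmaps hf hz hlamU hlamV hzne hchain hcobound
    hsc
end
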